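/- arXiv:2508.13605 — 2 statements merged into one kernel-verified Lean document; each statement's English description precedes it below -/
import Mathlib

section
/- Let n be odd and R = GW[e]/(I·e, n·e) with GW = GW(k). Then the GW-algebra homomorphism from ℤ[c]/(nc) to R sending c^i to h·e^i = 2·e^i (for i ≥ 1) and 1 to h has image equal to the ideal generated by h together with all elements 2e^i, and the quotient of R by this image is isomorphic to W(k) = GW(k)/(h), concentrated in degree 0. -/
noncomputable section

/-- The relation ideal for `R = GW[e]/(I·e, n·e)`, the presentation of the total
Chow–Witt ring of `Bμ_n` for `n` odd. -/
def chowWittBmunRel (GW : Type*) [CommRing GW] (I : Ideal GW) (n : ℕ) :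
    Ideal (Polynomial GW) :=
  Ideal.span (((fun a => Polynomial.C a * Polynomial.X) '' (I : Set GW)) ∪
    {(n : Polynomial GW) * Polynomial.X})

namespace ChowWittAux

open Polynomial

variable {GW : Type*} [CommRing GW] {I : Ideal GW} {n : ℕ}

lemma CX_mem {a : GW} (ha : a ∈ I) : C a * X ∈ chowWittBmunRel GW I n :=
  Ideal.subset_span (Or.inl ⟨a, ha, rfl⟩)

lemma nX_mem : (n : GW[X]) * X ∈ chowWittBmunRel GW I n :=
  Ideal.subset_span (Or.inr rfl)

lemma mk_C_mul_e_pow {a : GW} (ha : a ∈ I) (i : ℕ) :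
    Ideal.Quotient.mk (chowWittBmunRel GW I n) (C a) *
      (Ideal.Quotient.mk (chowWittBmunRel GW I n) X) ^ (i + 1) = 0 := by
  have hm : C a * X ^ (i + 1) ∈ chowWittBmunRel GW I n := by
    have := Ideal.mul_mem_right (X ^ i) _ (CX_mem (n := n) ha)
    convert this using 1
    ring
  simpa [map_mul, map_pow] using (Ideal.Quotient.eq_zero_iff_mem).2 hm

lemma n_mul_e_pow (i : ℕ) :
    (n : GW[X] ⧸ chowWittBmunRel GW I n) *
      (Ideal.Quotient.mk (chowWittBmunRel GW I n) X) ^ (i + 1) = 0 := by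
  have hm : (n : GW[X]) * X ^ (i + 1) ∈ chowWittBmunRel GW I n := by
    have := Ideal.mul_mem_right (X ^ i) _ (nX_mem (I := I) (n := n))
    convert this using 1
    ring
  have := (Ideal.Quotient.eq_zero_iff_mem).2 hm
  simpa [map_mul, map_pow] using this

end ChowWittAux

open Polynomial ChowWittAux in
set_option maxHeartbeats 1000000 in
/-- Let `n` be odd and `R = GW[e]/(I·e, n·e)`.  The image of the hyperbolic
map from `ℤ[c]/(nc)` (which sends `1 ↦ h` and `c^i ↦ h·e^i = 2·e^i` for `i ≥ 1`, hence is
the additive subgroup generated by `h` and the elements `2·e^i`) is the ideal generated by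
`h` together with all the `2·e^i`, and the quotient of `R` by this ideal is isomorphic to
`W(k) = GW(k)/(h)`, concentrated in degree `0` (i.e. via the structure map from `GW`). -/
theorem chowWittBmun_hyperbolic_image_and_witt_quotient
    (GW : Type*) [CommRing GW] (I : Ideal GW) (h : GW) (rank : GW →+* ℤ)
    (hsurj : Function.Surjective rank) (hker : RingHom.ker rank = I)
    (hh : h - 2 ∈ I) (hIh : ∀ g ∈ I, g * h = 0)
    (n : ℕ) (hodd : Odd n) (hpos : 0 < n) :
    let R := Polynomial GW ⧸ chowWittBmunRel GW I n
    let π := Ideal.Quotient.mk (chowWittBmunRel GW I n)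
    let e := π Polynomial.X
    let S : Set R := {algebraMap GW R h} ∪ {x | ∃ i : ℕ, x = 2 * e ^ (i + 1)}
    ((AddSubgroup.closure S : Set R) = (Ideal.span S : Set R)) ∧
      ∃ φ : (R ⧸ Ideal.span S) ≃+* GW ⧸ Ideal.span {h},
        ∀ g : GW,
          φ (Ideal.Quotient.mk (Ideal.span S) (algebraMap GW R g)) =
            Ideal.Quotient.mk (Ideal.span {h}) g := by
  intro R π e S
  have he : π Polynomial.X = e := rfl
  have halg : ∀ g : GW, algebraMap GW R g = π (C g) := fun g => rfl
  have hmem_I : ∀ a : GW, a - (rank a : GW) ∈ I := by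
    intro a
    rw [← hker]
    simp [RingHom.mem_ker, map_sub, map_intCast]
  have hCe : ∀ (a : GW), a ∈ I → ∀ (i : ℕ), π (C a) * e ^ (i + 1) = 0 := by
    intro a ha i; exact mk_C_mul_e_pow ha i
  have hne : ∀ i : ℕ, (n : R) * e ^ (i + 1) = 0 := fun i => n_mul_e_pow i
  have hrank_e : ∀ (a : GW) (i : ℕ), π (C a) * e ^ (i + 1) = (rank a) • e ^ (i + 1) := by
    intro a i
    have h0 : π (C (a - (rank a : GW))) * e ^ (i + 1) = 0 := hCe _ (hmem_I a) i
    simp only [map_sub, map_intCast, sub_mul] at h0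
    rw [zsmul_eq_mul]
    exact sub_eq_zero.mp h0
  have hrank_h : ∀ a : GW, π (C a) * π (C h) = (rank a) • π (C h) := by
    intro a
    have h0 : (a - (rank a : GW)) * h = 0 := hIh _ (hmem_I a)
    have h1 : π (C ((a - (rank a : GW)) * h)) = 0 := by rw [h0, map_zero, map_zero]
    simp only [map_mul, map_sub, map_intCast, sub_mul] at h1
    rw [zsmul_eq_mul]
    exact sub_eq_zero.mp h1
  have hhe : ∀ i : ℕ, π (C h) * e ^ (i + 1) = 2 * e ^ (i + 1) := by
    intro i
    have h0 : π (C (h - 2)) * e ^ (i + 1) = 0 := hCe _ hh i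
    simp only [map_sub, map_ofNat, sub_mul] at h0
    exact sub_eq_zero.mp h0
  obtain ⟨m, hm⟩ := hodd
  have he_mult : ∀ i : ℕ, e ^ (i + 1) = (m + 1) • (2 * e ^ (i + 1)) := by
    intro i
    rw [nsmul_eq_mul]
    have hnR : (n : R) = 2 * (m : R) + 1 := by
      have := congrArg (fun t : ℕ => (t : R)) hm
      push_cast at this
      rw [Nat.cast_mul, Nat.cast_ofNat] at this
      exact this
    have hmn : ((m + 1 : ℕ) : R) * (2 * e ^ (i + 1)) = (n : R) * e ^ (i + 1) + e ^ (i + 1) := by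
      rw [hnR]
      push_cast
      ring
    rw [hmn, hne i, zero_add]
  have hhS : π (C h) ∈ S := Or.inl (by rw [← halg h]; rfl)
  have h2eS : ∀ i : ℕ, 2 * e ^ (i + 1) ∈ S := fun i => Or.inr ⟨i, rfl⟩
  have h2C : π (C (2 : GW)) = 2 := by rw [map_ofNat, map_ofNat]
  have hconv : ∀ (a : GW) (i : ℕ),
      π (C (2 * a)) * e ^ (i + 1) = rank a • (2 * e ^ (i + 1)) := by
    intro a i
    have hx : π (C (2 * a)) * e ^ (i + 1) = 2 * (π (C a) * e ^ (i + 1)) := by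
      simp only [map_mul]
      rw [h2C]
      ring
    rw [hx, hrank_e a i, mul_smul_comm]
  -- key absorption lemma
  have key : ∀ (r : R) (x : R), x ∈ S → r * x ∈ AddSubgroup.closure S := by
    intro r x hx
    obtain ⟨p, rfl⟩ := Ideal.Quotient.mk_surjective (I := chowWittBmunRel GW I n) r
    induction p using Polynomial.induction_on' with
    | add p q hp hq =>
        rw [map_add, add_mul]
        exact AddSubgroup.add_mem _ hp hq
    | monomial j a =>
        rw [← Polynomial.C_mul_X_pow_eq_monomial, map_mul, map_pow, he]
        rcases hx with hx | ⟨i, rfl⟩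
        · simp only [Set.mem_singleton_iff] at hx
          subst hx
          rw [halg]
          cases j with
          | zero =>
              rw [pow_zero, mul_one, hrank_h a]
              exact AddSubgroup.zsmul_mem _ (AddSubgroup.subset_closure hhS) _
          | succ j =>
              have hstep : π (C a) * e ^ (j + 1) * π (C h)
                  = π (C (2 * a)) * e ^ (j + 1) := by
                rw [show π (C a) * e ^ (j + 1) * π (C h)
                    = π (C a) * (π (C h) * e ^ (j + 1)) by ring, hhe j]
                simp only [map_mul]
                rw [h2C]
                ring
              rw [hstep, hconv a j]
              exact AddSubgroup.zsmul_mem _ (AddSubgroup.subset_closure (h2eS j)) _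
        · have hstep : π (C a) * e ^ j * (2 * e ^ (i + 1))
              = π (C (2 * a)) * e ^ (j + i + 1) := by
            simp only [map_mul]
            rw [h2C]
            ring
          rw [hstep, hconv a (j + i)]
          exact AddSubgroup.zsmul_mem _ (AddSubgroup.subset_closure (h2eS (j + i))) _
  have key2 : ∀ (r x : R), x ∈ AddSubgroup.closure S → r * x ∈ AddSubgroup.closure S := by
    intro r x hx
    refine AddSubgroup.closure_induction (fun y hy => key r y hy)
      (by simpa using AddSubgroup.zero_mem (AddSubgroup.closure S))
      (fun a b _ _ ha hb => by rw [mul_add]; exact AddSubgroup.add_mem _ ha hb)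
      (fun a _ ha => by
        rw [show r * -a = -(r * a) by ring]
        exact AddSubgroup.neg_mem _ ha) hx
  constructor
  · apply Set.Subset.antisymm
    · intro x hx
      refine AddSubgroup.closure_induction (fun y hy => Ideal.subset_span hy)
        (Ideal.zero_mem _) (fun a b _ _ ha hb => Ideal.add_mem _ ha hb)
        (fun a _ ha => neg_mem ha) hx
    · intro x hx
      refine Submodule.span_induction (fun y hy => AddSubgroup.subset_closure hy)
        (AddSubgroup.zero_mem _) (fun a b _ _ ha hb => AddSubgroup.add_mem _ ha hb)
        (fun r y _ hy => by rw [smul_eq_mul]; exact key2 r y hy) hx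
  · -- construct the ring isomorphism
    set ψ0 : GW[X] →+* GW ⧸ Ideal.span {h} :=
      Polynomial.eval₂RingHom (Ideal.Quotient.mk (Ideal.span {h})) 0 with hψ0
    have hJker : chowWittBmunRel GW I n ≤ RingHom.ker ψ0 := by
      rw [chowWittBmunRel, Ideal.span_le]
      rintro p (⟨a, ha, rfl⟩ | rfl) <;>
        simp [RingHom.mem_ker, hψ0]
    set ψ : R →+* GW ⧸ Ideal.span {h} :=
      Ideal.Quotient.lift (chowWittBmunRel GW I n) ψ0
        (fun p hp => RingHom.mem_ker.mp (hJker hp)) with hψ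
    have hψπ : ∀ p : GW[X], ψ (π p) = ψ0 p := fun p => rfl
    have hψC : ∀ g : GW, ψ (π (C g)) = Ideal.Quotient.mk (Ideal.span {h}) g := by
      intro g; rw [hψπ, hψ0]; simp
    have hψe : ψ e = 0 := by
      rw [← he, hψπ, hψ0]; simp
    have hSψ : ∀ x ∈ Ideal.span S, ψ x = 0 := by
      have : Ideal.span S ≤ RingHom.ker ψ := by
        rw [Ideal.span_le]
        rintro x (hx | ⟨i, rfl⟩)
        · simp only [Set.mem_singleton_iff] at hx
          subst hx
          rw [SetLike.mem_coe, RingHom.mem_ker, halg h, hψC h]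
          exact Ideal.Quotient.eq_zero_iff_mem.2 (Ideal.subset_span rfl)
        · rw [SetLike.mem_coe, RingHom.mem_ker, map_mul, map_pow, hψe]
          simp
      exact fun x hx => RingHom.mem_ker.mp (this hx)
    set φ0 : (R ⧸ Ideal.span S) →+* GW ⧸ Ideal.span {h} :=
      Ideal.Quotient.lift (Ideal.span S) ψ hSψ with hφ0
    have heS : e ∈ Ideal.span S := by
      have h2 : (e : R) = ((m + 1 : ℕ) : R) * (2 * e ^ (0 + 1)) := by
        have h1 := he_mult 0
        rw [nsmul_eq_mul] at h1
        rw [← h1, zero_add, pow_one]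
      rw [h2]
      exact Ideal.mul_mem_left _ _ (Ideal.subset_span (h2eS 0))
    have hθker : ∀ a ∈ Ideal.span {h},
        ((Ideal.Quotient.mk (Ideal.span S)).comp (algebraMap GW R)) a = 0 := by
      have : Ideal.span {h} ≤
          RingHom.ker ((Ideal.Quotient.mk (Ideal.span S)).comp (algebraMap GW R)) := by
        rw [Ideal.span_le]
        rintro x rfl
        rw [SetLike.mem_coe, RingHom.mem_ker, RingHom.comp_apply]
        exact Ideal.Quotient.eq_zero_iff_mem.2 (Ideal.subset_span (Or.inl rfl))
      exact fun a ha => RingHom.mem_ker.mp (this ha)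
    set θ0 : (GW ⧸ Ideal.span {h}) →+* R ⧸ Ideal.span S :=
      Ideal.Quotient.lift (Ideal.span {h})
        ((Ideal.Quotient.mk (Ideal.span S)).comp (algebraMap GW R)) hθker with hθ0
    have hcomp1 : φ0.comp θ0 = RingHom.id _ := by
      apply Ideal.Quotient.ringHom_ext
      ext g
      simp only [RingHom.comp_apply, RingHom.id_apply, hθ0, Ideal.Quotient.lift_mk,
        RingHom.coe_comp, Function.comp_apply, hφ0]
      rw [halg g]
      exact hψC g
    have hcomp2 : θ0.comp φ0 = RingHom.id _ := by
      apply Ideal.Quotient.ringHom_ext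
      apply Ideal.Quotient.ringHom_ext
      apply Polynomial.ringHom_ext
      · intro a
        simp only [RingHom.comp_apply, RingHom.id_apply, hφ0, Ideal.Quotient.lift_mk,
          hθ0]
        rw [show (Ideal.Quotient.mk (chowWittBmunRel GW I n)) (C a) = π (C a) from rfl,
          hψC a, Ideal.Quotient.lift_mk]
        rw [RingHom.comp_apply, halg a]
      · simp only [RingHom.comp_apply, RingHom.id_apply, hφ0, Ideal.Quotient.lift_mk, hθ0]
        rw [show (Ideal.Quotient.mk (chowWittBmunRel GW I n)) X = e from rfl, hψe, map_zero]
        exact (Ideal.Quotient.eq_zero_iff_mem.2 heS).symm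
    refine ⟨RingEquiv.ofRingHom φ0 θ0 ?_ ?_, ?_⟩
    · exact hcomp1
    · exact hcomp2
    · intro g
      show φ0 (Ideal.Quotient.mk (Ideal.span S) (algebraMap GW R g)) = _
      rw [hφ0, Ideal.Quotient.lift_mk, halg g]
      exact hψC g
end
end

section
/- Let R = GW[e,H]/(I·e, I·H, H²-2h) be the presented Chow–Witt ring of BG_m. Then for every odd integer j ≥ 1 and every i ≥ 0, the element H·e^i generates a GW-submodule isomorphic to ℤ (via GW → GW/I ≅ ℤ), i.e. the annihilator of H·e^i in GW is exactly I. -/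
open MvPolynomial

noncomputable section

/-- The relation ideal for `R = GW[e, H]/(I·e, I·H, H² - 2h)`, the presentation of the
total Chow–Witt ring of `BG_m`.  Variable `0` is `e` and variable `1` is `H`. -/
def chowWittBGmRel (GW : Type*) [CommRing GW] (I : Ideal GW) (h : GW) :
    Ideal (MvPolynomial (Fin 2) GW) :=
  Ideal.span (((fun a => C a * X 0) '' (I : Set GW)) ∪
    ((fun a => C a * X 1) '' (I : Set GW)) ∪ {X 1 ^ 2 - C (2 * h)})

lemma spanAddEquivInt (A : Type*) [CommRing A] (B : Type*) [CommRing B] [Algebra A B]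
    (rank : A →+* ℤ) (m : B)
    (key : ∀ g : A, algebraMap A B g * m = 0 ↔ rank g = 0) :
    ∃ φ : (Submodule.span A ({m} : Set B)) ≃+ ℤ,
      φ ⟨m, Submodule.mem_span_singleton_self _⟩ = 1 := by
  have hmem : ∀ n : ℤ, n • m ∈ Submodule.span A ({m} : Set B) :=
    fun n => zsmul_mem (Submodule.mem_span_singleton_self m) n
  have hsmul : ∀ n : ℤ, (n • m : B) = algebraMap A B ((n : ℤ) : A) * m := by
    intro n
    rw [map_intCast, ← zsmul_eq_mul]
  set ψ : ℤ →+ (Submodule.span A ({m} : Set B)) :=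
    { toFun := fun n => ⟨n • m, hmem n⟩
      map_zero' := by ext; simp
      map_add' := by intro a b; apply Subtype.ext; exact add_zsmul m a b } with hψ
  have hinj : Function.Injective ψ := by
    intro a b hab
    have h1 : (a - b) • m = 0 := by
      have := congrArg Subtype.val hab
      simp only [hψ, AddMonoidHom.coe_mk, ZeroHom.coe_mk] at this
      have h2 : a • m - b • m = 0 := by rw [this, sub_self]
      rw [sub_zsmul m a b]
      simpa [sub_eq_add_neg] using h2
    rw [hsmul, key, map_intCast, Int.cast_id] at h1
    omega
  have hsurjψ : Function.Surjective ψ := by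
    rintro ⟨x, hx⟩
    rw [Submodule.mem_span_singleton] at hx
    obtain ⟨g, rfl⟩ := hx
    refine ⟨rank g, ?_⟩
    apply Subtype.ext
    simp only [hψ, AddMonoidHom.coe_mk, ZeroHom.coe_mk]
    have h0 : algebraMap A B (g - ((rank g : ℤ) : A)) * m = 0 := by
      rw [key, map_sub, map_intCast, Int.cast_id, sub_self]
    rw [map_sub, sub_mul, sub_eq_zero] at h0
    rw [hsmul, ← h0, ← Algebra.smul_def]
  set Φ := AddEquiv.ofBijective ψ ⟨hinj, hsurjψ⟩ with hΦ
  refine ⟨Φ.symm, ?_⟩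
  rw [AddEquiv.symm_apply_eq]
  have hΦ1 : Φ 1 = ψ 1 := rfl
  rw [hΦ1]
  apply Subtype.ext
  simp [hψ]

/-- In `R = GW[e,H]/(I·e, I·H, H²-2h)`, where `GW/I ≅ ℤ` via the rank map,
for every odd integer `j ≥ 1` and every `i ≥ 0` the element `H·e^i` generates a
`GW`-submodule isomorphic to `ℤ` (via `GW → GW/I ≅ ℤ`), i.e. the annihilator of `H·e^i`
in `GW` is exactly `I`. -/
theorem chowWittBGm_He_annihilator
    (GW : Type*) [CommRing GW] (I : Ideal GW) (h : GW) (rank : GW →+* ℤ)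
    (hsurj : Function.Surjective rank) (hker : RingHom.ker rank = I) :
    let R := MvPolynomial (Fin 2) GW ⧸ chowWittBGmRel GW I h
    let π := Ideal.Quotient.mk (chowWittBGmRel GW I h)
    let e := π (X 0)
    let H := π (X 1)
    ∀ j : ℕ, Odd j → 1 ≤ j → ∀ i : ℕ,
      (∀ g : GW, algebraMap GW R g * (H * e ^ i) = 0 ↔ g ∈ I) ∧
        ∃ φ : (Submodule.span GW ({H * e ^ i} : Set R)) ≃+ ℤ,
          φ ⟨H * e ^ i, Submodule.mem_span_singleton_self _⟩ = 1 := by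
  intro R π e H j hj hj1 i
  classical
  -- detection homomorphism into ℤ[X]/(X² - 2·rank h)
  set c : ℤ := 2 * rank h with hc
  set K : Ideal (Polynomial ℤ) := Ideal.span {Polynomial.X ^ 2 - Polynomial.C c} with hK
  set f : MvPolynomial (Fin 2) GW →+* Polynomial ℤ :=
    MvPolynomial.eval₂Hom (Polynomial.C.comp rank)
      (fun idx => if idx = 0 then 1 else Polynomial.X) with hf
  set φ : MvPolynomial (Fin 2) GW →+* Polynomial ℤ ⧸ K := (Ideal.Quotient.mk K).comp f with hφ
  have hJker : chowWittBGmRel GW I h ≤ RingHom.ker φ := by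
    rw [chowWittBGmRel, Ideal.span_le]
    rintro p (⟨⟨a, ha, rfl⟩ | ⟨a, ha, rfl⟩⟩ | hp)
    · have : rank a = 0 := by
        rw [← hker] at ha; exact ha
      simp [RingHom.mem_ker, hφ, hf, this]
    · have : rank a = 0 := by
        rw [← hker] at ha; exact ha
      simp [RingHom.mem_ker, hφ, hf, this]
    · simp only [Set.mem_singleton_iff] at hp
      subst hp
      have hfv : f (X 1 ^ 2 - C (2 * h)) = Polynomial.X ^ 2 - Polynomial.C c := by
        simp [hf, hc, map_ofNat, Int.cast_id]
      rw [SetLike.mem_coe, RingHom.mem_ker, hφ, RingHom.comp_apply, hfv, Ideal.Quotient.eq_zero_iff_mem, hK]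
      exact Ideal.subset_span rfl
  -- the key annihilator statement
  have key : ∀ g : GW, algebraMap GW R g * (H * e ^ i) = 0 ↔ g ∈ I := by
    intro g
    constructor
    · intro hg
      have hrepr : algebraMap GW R g * (H * e ^ i) = π (C g * (X 1 * X 0 ^ i)) := by
        simp only [map_mul, map_pow]
        rfl
      rw [hrepr, Ideal.Quotient.eq_zero_iff_mem] at hg
      have h2 : φ (C g * (X 1 * X 0 ^ i)) = 0 := hJker hg
      have h3 : f (C g * (X 1 * X 0 ^ i)) = Polynomial.C (rank g) * Polynomial.X := by
        simp [hf]
      rw [hφ, RingHom.comp_apply, h3, Ideal.Quotient.eq_zero_iff_mem, hK,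
        Ideal.mem_span_singleton] at h2
      -- degree argument forces rank g = 0
      have hrg : rank g = 0 := by
        by_contra hne
        have hCX : Polynomial.C (rank g) * Polynomial.X ≠ 0 := by
          simp [Polynomial.X_ne_zero, hne]
        have hdeg := Polynomial.natDegree_le_of_dvd h2 hCX
        rw [Polynomial.natDegree_X_pow_sub_C, Polynomial.natDegree_C_mul_X _ hne] at hdeg
        omega
      rw [← hker]; exact hrg
    · intro hg
      have hmem : C g * X 1 ∈ chowWittBGmRel GW I h := by
        rw [chowWittBGmRel]
        exact Ideal.subset_span (Or.inl (Or.inr ⟨g, hg, rfl⟩))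
      have h0 : π (C g * X 1) = 0 := (Ideal.Quotient.eq_zero_iff_mem).2 hmem
      have : algebraMap GW R g * H = 0 := by
        have : algebraMap GW R g * H = π (C g * X 1) := by
          simp only [map_mul]; rfl
        rw [this, h0]
      calc algebraMap GW R g * (H * e ^ i) = (algebraMap GW R g * H) * e ^ i := by ring
        _ = 0 := by rw [this, zero_mul]
  refine ⟨key, spanAddEquivInt GW R rank (H * e ^ i) ?_⟩
  intro g
  rw [key, ← hker, RingHom.mem_ker]
end
end
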